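/- If a hypergraph H has h-LLY–Ricci curvature at least some positive constant κ between all adjacent vertices, and if h'(1) = 0 is allowed, then in fact inf_{x,y} κ̃(h;x,y) ≤ 0 whenever h'(1) = 0 and diam(H) ≥ 2; in particular, a positive uniform lower curvature bound is impossible when h'(1) = 0 and diam(H) ≥ 2. -/

import Mathlib

open Filter Set Classical

noncomputable section

/-- A hypergraph: a vertex type together with a family of hyperedges. -/
structure HGraph (V : Type*) where
  E : Set (Set V)

namespace HGraph

variable {V : Type*}

/-- Two distinct vertices are adjacent if some hyperedge contains both. -/
def Adj (H : HGraph V) (x y : V) : Prop :=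
  x ≠ y ∧ ∃ e ∈ H.E, x ∈ e ∧ y ∈ e

/-- There is a path of length `n` from `x` to `y` (each consecutive pair lies
in a common hyperedge). -/
def IsPath (H : HGraph V) (x y : V) (n : ℕ) : Prop :=
  ∃ f : ℕ → V, f 0 = x ∧ f n = y ∧ ∀ i < n, ∃ e ∈ H.E, f i ∈ e ∧ f (i + 1) ∈ e

/-- The graph distance on a hypergraph: the shortest length of a path. -/
def dist (H : HGraph V) (x y : V) : ℕ :=
  sInf {n | H.IsPath x y n}

def Connected (H : HGraph V) : Prop := ∀ x y : V, ∃ n, H.IsPath x y n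

def LocallyFinite (H : HGraph V) : Prop := ∀ x : V, {y | H.Adj x y}.Finite

/-- A hypergraph is simple if no hyperedge is contained in a different one. -/
def Simple (H : HGraph V) : Prop :=
  ∀ e₁ ∈ H.E, ∀ e₂ ∈ H.E, e₁ ≠ e₂ → ¬e₁ ⊆ e₂

/-- The degree of a vertex: the number of its neighbours. -/
def degree (H : HGraph V) (x : V) : ℕ := {y | H.Adj x y}.ncard

end HGraph

/-- A finitely supported probability function on `V`. -/
def IsProb {V : Type*} (μ : V → ℝ) : Prop :=
  (∀ v, 0 ≤ μ v) ∧ (Function.support μ).Finite ∧ ∑' v, μ v = 1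

/-- A coupling of two probability functions. -/
def IsCoupling {V : Type*} (π : V → V → ℝ) (μ ν : V → ℝ) : Prop :=
  (∀ x y, 0 ≤ π x y) ∧ (∀ x, ∑' y, π x y = μ x) ∧ (∀ y, ∑' x, π x y = ν y)

/-- The L¹-Wasserstein distance with respect to the graph distance of `H`. -/
def W1 {V : Type*} (H : HGraph V) (μ ν : V → ℝ) : ℝ :=
  sInf {c | ∃ π, IsCoupling π μ ν ∧
    c = ∑' p : V × V, (H.dist p.1 p.2 : ℝ) * π p.1 p.2}

/-- A sequence of probability measures from `μ` to `ν` each of whose increments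
is supported in a single hyperedge. -/
def WhAdmissible {V : Type*} (H : HGraph V) (μ ν : V → ℝ) (I : ℕ)
    (ξ : ℕ → V → ℝ) : Prop :=
  ξ 0 = μ ∧ ξ I = ν ∧ (∀ i ≤ I, IsProb (ξ i)) ∧
    ∀ i < I, ∃ e ∈ H.E, Function.support (fun v => ξ (i + 1) v - ξ i v) ⊆ e

/-- The new transport distance `W_h`. -/
def Wh {V : Type*} (H : HGraph V) (h : ℝ → ℝ) (μ ν : V → ℝ) : ℝ :=
  sInf {c | ∃ I ξ, WhAdmissible H μ ν I ξ ∧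
    c = ∑ i ∈ Finset.range I, h (W1 H (ξ i) (ξ (i + 1)))}

/-- Assumptions on the concave cost function `h`, with one-sided derivatives
`D0 = h'(0)` and `D1 = h'(1)`. -/
structure CostFn (h : ℝ → ℝ) (D0 D1 : ℝ) : Prop where
  nonneg : ∀ x ∈ Set.Icc (0 : ℝ) 1, 0 ≤ h x
  mono : MonotoneOn h (Set.Icc (0 : ℝ) 1)
  cont : ContinuousOn h (Set.Icc (0 : ℝ) 1)
  concave : ConcaveOn ℝ (Set.Icc (0 : ℝ) 1) h
  zero : h 0 = 0
  d0_pos : 0 < D0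
  d0 : Filter.Tendsto (fun t => h t / t) (nhdsWithin 0 (Set.Ioi 0)) (nhds D0)
  d1 : Filter.Tendsto (fun t => (h 1 - h t) / (1 - t))
    (nhdsWithin 1 (Set.Iio 1)) (nhds D1)

/-- The Dirac measure at a point, as a probability function. -/
def dirac {V : Type*} (x : V) : V → ℝ := fun v => if v = x then 1 else 0

/-- The `α`-lazy uniform random walk at `x`. -/
def rw {V : Type*} (H : HGraph V) (α : ℝ) (x : V) : V → ℝ :=
  fun v => if v = x then α else if H.Adj x v then (1 - α) / (H.degree x) else 0

/-- The `(α,h)`-Ollivier–Ricci curvature. -/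
def ORic {V : Type*} (H : HGraph V) (h : ℝ → ℝ) (α : ℝ) (x y : V) : ℝ :=
  1 - Wh H h (rw H α x) (rw H α y) / Wh H h (dirac x) (dirac y)

/-- The `h`-LLY–Ricci curvature. -/
def hLLY {V : Type*} (H : HGraph V) (h : ℝ → ℝ) (x y : V) : ℝ :=
  Filter.liminf (fun α => ORic H h α x y / (1 - α)) (nhdsWithin 1 (Set.Iio 1))

end

/-! For `d = dist x y ≥ 2`, the lazy walks at `x` and `y` move only the mass `1 - α` each, by
one step. Testing any admissible chain from one walk to the other against the 1-Lipschitz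
potential `dist(·, y)` shows that its steps, each of `W1`-length in `[0, 1]`, have total length
at least `(d - 1) + (2α - 1)`; by concavity of `h` (a majorization argument) the `h`-cost of the
chain is then at least `(d - 1) h(1) + h(2α - 1)`. As `W_h(δ_x, δ_y) = d h(1)`, this gives
`κ_α(x, y) ≤ (h(1) - h(2α - 1)) / (d h(1))`, which is `o(1 - α)` when `h'(1) = 0`.

On an infinite vertex set the series defining `W1` are `tsum`s, whose junk value `0` makes every
transport cost vanish; the `liminf` of the resulting `1 / (1 - α)` is then the junk value `0`. -/

open Topology

namespace HGraph

variable {V : Type*} {H : HGraph V}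

theorem IsPath.trans {x y z : V} {m n : ℕ} (hxy : H.IsPath x y m) (hyz : H.IsPath y z n) :
    H.IsPath x z (m + n) := by
  obtain ⟨f, hf0, hfm, hf⟩ := hxy
  obtain ⟨g, hg0, hgn, hg⟩ := hyz
  set F : ℕ → V := fun i => if i ≤ m then f i else g (i - m) with hF
  have hF_of_le : ∀ i, m ≤ i → F i = g (i - m) := by
    intro i hi
    rcases hi.eq_or_lt with rfl | hlt
    · simp [hF, hfm, hg0]
    · simp [hF, hlt.not_ge]
  refine ⟨F, by simp [hF, hf0], by rw [hF_of_le _ (by omega), Nat.add_sub_cancel_left, hgn],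
    fun i hi => ?_⟩
  rcases lt_or_ge i m with him | him
  · simpa [hF, him.le, Nat.succ_le_of_lt him] using hf i him
  · rw [hF_of_le i him, hF_of_le (i + 1) (by omega), Nat.sub_add_comm him]
    exact hg (i - m) (by omega)

theorem isPath_dist (hconn : H.Connected) (x y : V) : H.IsPath x y (H.dist x y) :=
  Nat.sInf_mem (hconn x y)

theorem dist_self (x : V) : H.dist x x = 0 :=
  Nat.eq_zero_of_le_zero (Nat.sInf_le ⟨fun _ => x, rfl, rfl, by omega⟩)

theorem dist_triangle (hconn : H.Connected) (x y z : V) :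
    H.dist x z ≤ H.dist x y + H.dist y z :=
  Nat.sInf_le ((isPath_dist hconn x y).trans (isPath_dist hconn y z))

theorem dist_le_one_of_mem {e : Set V} (he : e ∈ H.E) {u v : V} (hu : u ∈ e) (hv : v ∈ e) :
    H.dist u v ≤ 1 :=
  Nat.sInf_le ⟨fun i => if i = 0 then u else v, rfl, rfl,
    fun i hi => ⟨e, he, by simp [show i = 0 by omega, hu, hv]⟩⟩

theorem one_le_dist (hconn : H.Connected) {x y : V} (hxy : x ≠ y) : 1 ≤ H.dist x y := by
  obtain ⟨f, hf0, hfd, -⟩ := isPath_dist hconn x y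
  refine Nat.one_le_iff_ne_zero.2 fun h0 => hxy ?_
  rw [← hf0, ← hfd, h0]

theorem Adj.symm {x y : V} (hxy : H.Adj x y) : H.Adj y x :=
  let ⟨hne, e, he, hx, hy⟩ := hxy
  ⟨hne.symm, e, he, hy, hx⟩

theorem Adj.dist_le_one {x y : V} (hxy : H.Adj x y) : H.dist x y ≤ 1 :=
  let ⟨_, he, hx, hy⟩ := hxy.2
  dist_le_one_of_mem he hx hy

theorem dist_sub_dist_le (hconn : H.Connected) (u v y : V) :
    (H.dist u y : ℝ) - H.dist v y ≤ H.dist u v :=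
  sub_le_iff_le_add.2 (by exact_mod_cast dist_triangle hconn u v y)

theorem ne_of_two_le_dist {x y : V} (hd : 2 ≤ H.dist x y) : x ≠ y := by
  rintro rfl
  simp [dist_self] at hd

theorem exists_adj_of_isPath {x z : V} (hxz : x ≠ z) {n : ℕ} (hp : H.IsPath x z n) :
    ∃ w, H.Adj x w := by
  induction n generalizing x with
  | zero =>
    obtain ⟨f, hf0, hfn, -⟩ := hp
    exact absurd (hf0.symm.trans hfn) hxz
  | succ n ih =>
    obtain ⟨f, hf0, hfn, hstep⟩ := hp
    by_cases h1 : f 1 = x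
    · exact ih hxz ⟨fun i => f (i + 1), h1, hfn, fun i hi => hstep (i + 1) (by omega)⟩
    · obtain ⟨e, he, hx, h1e⟩ := hstep 0 (by omega)
      exact ⟨f 1, Ne.symm h1, e, he, hf0 ▸ hx, h1e⟩

theorem degree_pos [Finite V] (hconn : H.Connected) {x z : V} (hxz : x ≠ z) :
    0 < H.degree x := by
  obtain ⟨w, hw⟩ := exists_adj_of_isPath hxz (isPath_dist hconn x z)
  exact Set.ncard_pos (Set.toFinite _) |>.2 ⟨w, hw⟩

end HGraph

theorem ConcaveOn.add_le_add_of_add_eq {s : Set ℝ} {f : ℝ → ℝ} (hf : ConcaveOn ℝ s f)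
    {u v a b : ℝ} (hu : u ∈ s) (hv : v ∈ s) (hua : u ≤ a) (hav : a ≤ v) (hab : a + b = u + v) :
    f u + f v ≤ f a + f b := by
  rcases hua.eq_or_lt with rfl | hlt
  · obtain rfl : b = v := by linarith
    rfl
  -- `a` and `b` are the convex combinations of `u` and `v` with swapped weights `t`, `1 - t`
  set t := (v - a) / (v - u) with ht
  have huv : 0 < v - u := by linarith
  have ht0 : 0 ≤ t := div_nonneg (by linarith) huv.le
  have ht1 : 0 ≤ 1 - t := by rw [ht, one_sub_div huv.ne']; exact div_nonneg (by linarith) huv.le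
  have hta : t * u + (1 - t) * v = a := by rw [ht]; field_simp; ring
  have htb : (1 - t) * u + t * v = b := by linear_combination -hta - hab
  have h₁ := hf.2 hu hv ht0 ht1 (by ring)
  have h₂ := hf.2 hu hv ht1 ht0 (by ring)
  simp only [smul_eq_mul, hta, htb] at h₁ h₂
  linarith

namespace CostFn

variable {h : ℝ → ℝ} {D0 D1 : ℝ}

theorem one_pos (hc : CostFn h D0 D1) : 0 < h 1 := by
  have hev : ∀ᶠ t in 𝓝[>] (0 : ℝ), 0 < h t / t ∧ t ∈ Ioo 0 1 :=
    (hc.d0.eventually (lt_mem_nhds hc.d0_pos)).and (Ioo_mem_nhdsGT zero_lt_one)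
  obtain ⟨t, hpos, ht0, ht1⟩ := hev.exists
  calc 0 < h t := (div_pos_iff_of_pos_right ht0).1 hpos
    _ ≤ h 1 := hc.mono ⟨ht0.le, ht1.le⟩ ⟨zero_le_one, le_rfl⟩ ht1.le

/-- Any `t ∈ [0,1]ⁿ` with `∑ tᵢ ≥ k + s` is majorized by `(1, …, 1, s, 0, …)` (`k` ones), so
concavity gives the bound. -/
theorem nat_mul_add_le_sum (hc : CostFn h D0 D1) {t : ℕ → ℝ} {n : ℕ}
    (ht : ∀ i < n, t i ∈ Icc (0 : ℝ) 1) {k : ℕ} {s : ℝ} (hs : s ∈ Icc (0 : ℝ) 1)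
    (hsum : k + s ≤ ∑ i ∈ Finset.range n, t i) :
    k * h 1 + h s ≤ ∑ i ∈ Finset.range n, h (t i) := by
  induction n generalizing k s with
  | zero =>
    simp only [Finset.range_zero, Finset.sum_empty] at hsum ⊢
    have hk : (k : ℝ) ≤ 0 := by linarith [hs.1]
    obtain rfl : k = 0 := Nat.cast_nonpos.1 hk
    obtain rfl : s = 0 := by linarith [hs.1]
    simp [hc.zero]
  | succ n ih =>
    have ht' : ∀ i < n, t i ∈ Icc (0 : ℝ) 1 := fun i hi => ht i (by omega)
    obtain ⟨ha0, ha1⟩ := ht n (by omega)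
    rw [Finset.sum_range_succ] at hsum ⊢
    have h01 : (0 : ℝ) ∈ Icc 0 1 := ⟨le_rfl, zero_le_one⟩
    have h11 : (1 : ℝ) ∈ Icc 0 1 := ⟨zero_le_one, le_rfl⟩
    rcases le_total (t n) s with has | hsa
    · have hih := ih ht' (s := s - t n) ⟨by linarith, by linarith [hs.2]⟩ (by linarith)
      have := hc.concave.add_le_add_of_add_eq (a := s - t n) (b := t n) h01 hs
        (by linarith) (by linarith) (by ring)
      linarith [hc.zero]
    · rcases k with _ | k
      · have hrest : 0 ≤ ∑ i ∈ Finset.range n, h (t i) :=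
          Finset.sum_nonneg fun i hi => hc.nonneg _ (ht' i (Finset.mem_range.1 hi))
        have := hc.mono hs ⟨ha0, ha1⟩ hsa
        simp only [Nat.cast_zero, zero_mul, zero_add]
        linarith
      · push_cast at hsum ⊢
        have hih := ih ht' (k := k) (s := s + 1 - t n) ⟨by linarith [hs.1], by linarith⟩
          (by linarith)
        have := hc.concave.add_le_add_of_add_eq (a := t n) (b := s + 1 - t n) hs h11 hsa ha1
          (by ring)
        linarith

end CostFn

theorem liminf_nonpos_of_eventually_le_of_tendsto {β : Type*} {f : Filter β} [f.NeBot]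
    {u g : β → ℝ} (hug : ∀ᶠ b in f, u b ≤ g b) (hg : Tendsto g f (𝓝 0)) : liminf u f ≤ 0 := by
  rw [liminf_eq]
  refine Real.sSup_nonpos fun a ha => ?_
  by_contra! ha0
  obtain ⟨b, hab, hub, hgb⟩ := (ha.and (hug.and (hg.eventually (gt_mem_nhds ha0)))).exists
  linarith

/-- In `ℝ` the `liminf` of a function tending to `+∞` is the junk value `sSup univ = 0`. -/
theorem liminf_eq_zero_of_tendsto_atTop {β : Type*} {f : Filter β} {u : β → ℝ}
    (hu : Tendsto u f atTop) : liminf u f = 0 := by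
  rw [liminf_eq, ← Real.sSup_univ]
  congr 1
  exact Set.eq_univ_of_forall fun a => (tendsto_atTop.1 hu a : _)

theorem tendsto_two_mul_sub_one_nhdsLT :
    Tendsto (fun α : ℝ => 2 * α - 1) (𝓝[<] 1) (𝓝[<] 1) := by
  refine tendsto_nhdsWithin_of_tendsto_nhds_of_eventually_within _ ?_ ?_
  · exact (((continuous_const.mul continuous_id).sub continuous_const).tendsto' 1 1
      (by norm_num)).mono_left nhdsWithin_le_nhds
  · filter_upwards [self_mem_nhdsWithin] with α (hα : α < 1)
    show 2 * α - 1 < 1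
    linarith

theorem tendsto_one_sub_nhdsLT : Tendsto (fun α : ℝ => 1 - α) (𝓝[<] 1) (𝓝[>] 0) := by
  refine tendsto_nhdsWithin_of_tendsto_nhds_of_eventually_within _ ?_ ?_
  · exact ((continuous_const.sub continuous_id).tendsto' 1 0 (by norm_num)).mono_left
      nhdsWithin_le_nhds
  · filter_upwards [self_mem_nhdsWithin] with α (hα : α < 1)
    show 0 < 1 - α
    linarith

theorem not_summable_of_one_le_on_infinite {ι : Type*} {f : ι → ℝ} {S : Set ι}
    (hS : S.Infinite) (hf : ∀ i ∈ S, 1 ≤ f i) : ¬ Summable f := fun hs =>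
  hS <| (Filter.eventually_cofinite.1 <| hs.tendsto_cofinite_zero.eventually
    (eventually_lt_nhds zero_lt_one)).subset fun i hi => (hf i hi).not_gt

section Transport

variable {V : Type*} {H : HGraph V} {μ ν : V → ℝ}

theorem coupling_cost_nonneg {π : V → V → ℝ} (hπ : IsCoupling π μ ν) :
    0 ≤ ∑' p : V × V, (H.dist p.1 p.2 : ℝ) * π p.1 p.2 :=
  tsum_nonneg fun _ => mul_nonneg (Nat.cast_nonneg _) (hπ.1 _ _)

theorem W1_nonneg (μ ν : V → ℝ) : 0 ≤ W1 H μ ν :=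
  Real.sInf_nonneg <| by
    rintro _ ⟨π, hπ, rfl⟩
    exact coupling_cost_nonneg hπ

variable [Fintype V]

theorem isProb_iff : IsProb μ ↔ (∀ v, 0 ≤ μ v) ∧ ∑ v, μ v = 1 := by
  simp [IsProb, tsum_fintype, Set.toFinite]

theorem isCoupling_iff {π : V → V → ℝ} : IsCoupling π μ ν ↔
    (∀ u v, 0 ≤ π u v) ∧ (∀ u, ∑ v, π u v = μ u) ∧ ∀ v, ∑ u, π u v = ν v := by
  simp [IsCoupling, tsum_fintype]

theorem isCoupling_mul (hμ : IsProb μ) (hν : IsProb ν) :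
    IsCoupling (fun u v => μ u * ν v) μ ν := by
  rw [isProb_iff] at hμ hν
  refine isCoupling_iff.2 ⟨fun u v => mul_nonneg (hμ.1 u) (hν.1 v), fun u => ?_, fun v => ?_⟩
  · rw [← Finset.mul_sum, hν.2, mul_one]
  · rw [← Finset.sum_mul, hμ.2, one_mul]

theorem W1_le_sum {π : V → V → ℝ} (hπ : IsCoupling π μ ν) :
    W1 H μ ν ≤ ∑ p : V × V, (H.dist p.1 p.2 : ℝ) * π p.1 p.2 :=
  csInf_le ⟨0, by rintro _ ⟨π, hπ, rfl⟩; exact coupling_cost_nonneg hπ⟩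
    ⟨π, hπ, (tsum_fintype _).symm⟩

theorem IsCoupling.sum_mul_sub {π : V → V → ℝ} (hπ : IsCoupling π μ ν) (φ : V → ℝ) :
    ∑ p : V × V, (φ p.1 - φ p.2) * π p.1 p.2 = ∑ v, φ v * μ v - ∑ v, φ v * ν v := by
  obtain ⟨-, hrow, hcol⟩ := isCoupling_iff.1 hπ
  simp only [sub_mul, Finset.sum_sub_distrib, Fintype.sum_prod_type]
  rw [Finset.sum_comm (f := fun u v => φ v * π u v)]
  simp only [← Finset.mul_sum, hrow, hcol]

theorem sum_mul_sub_sum_mul_le_W1 (hμ : IsProb μ) (hν : IsProb ν) {φ : V → ℝ}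
    (hφ : ∀ u v, φ u - φ v ≤ H.dist u v) :
    ∑ v, φ v * μ v - ∑ v, φ v * ν v ≤ W1 H μ ν := by
  refine le_csInf ⟨_, _, isCoupling_mul hμ hν, rfl⟩ ?_
  rintro _ ⟨π, hπ, rfl⟩
  rw [← hπ.sum_mul_sub, tsum_fintype]
  exact Finset.sum_le_sum fun p _ => mul_le_mul_of_nonneg_right (hφ p.1 p.2) (hπ.1 _ _)

/-- Meant for `μ`, `ν` that agree off `e`: the common mass stays in place and the masses on `e`
are coupled independently. -/
noncomputable def localCoupling (e : Set V) (μ ν : V → ℝ) (u v : V) : ℝ :=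
  (if u = v then μ u - e.indicator μ u else 0) +
    e.indicator μ u * e.indicator ν v / ∑ w, e.indicator μ w

variable {e : Set V}

theorem sum_indicator_eq_of_eqOn_compl (hμ : IsProb μ) (hν : IsProb ν)
    (hoff : ∀ v ∉ e, μ v = ν v) : ∑ v, e.indicator ν v = ∑ v, e.indicator μ v := by
  have hcompl : ∀ v, μ v - e.indicator μ v = ν v - e.indicator ν v := fun v => by
    by_cases hv : v ∈ e <;> simp [hv, hoff]
  have := Finset.sum_congr rfl fun v (_ : v ∈ Finset.univ) => hcompl v
  simp only [Finset.sum_sub_distrib, (isProb_iff.1 hμ).2, (isProb_iff.1 hν).2] at this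
  linarith

theorem isCoupling_localCoupling (hμ : IsProb μ) (hν : IsProb ν) (hoff : ∀ v ∉ e, μ v = ν v) :
    IsCoupling (localCoupling e μ ν) μ ν := by
  have hb := sum_indicator_eq_of_eqOn_compl hμ hν hoff
  rw [isProb_iff] at hμ hν
  unfold localCoupling
  set a := e.indicator μ
  set b := e.indicator ν
  generalize hm : ∑ v, a v = m at hb ⊢
  have ha0 : ∀ v, 0 ≤ a v := Set.indicator_nonneg fun v _ => hμ.1 v
  have hb0 : ∀ v, 0 ≤ b v := Set.indicator_nonneg fun v _ => hν.1 v
  have hμa : ∀ v, 0 ≤ μ v - a v := fun v => by by_cases hv : v ∈ e <;> simp [a, hv, hμ.1 v]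
  have ham : ∀ v, a v ≤ m := fun v => hm ▸ Finset.single_le_sum (fun v _ => ha0 v) (by simp)
  have hbm : ∀ v, b v ≤ m := fun v =>
    hb ▸ Finset.single_le_sum (fun v _ => hb0 v) (Finset.mem_univ v)
  have hcancel : ∀ c, 0 ≤ c → c ≤ m → c * m / m = c := fun c hc hcm =>
    mul_div_cancel_of_imp fun hm => le_antisymm (hm ▸ hcm) hc
  refine isCoupling_iff.2 ⟨fun u v => ?_, fun u => ?_, fun v => ?_⟩
  · have : 0 ≤ a u * b v / m := div_nonneg (mul_nonneg (ha0 u) (hb0 v)) ((ha0 u).trans (ham u))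
    split_ifs <;> linarith [hμa u]
  · simp only [Finset.sum_add_distrib, Finset.sum_ite_eq, Finset.mem_univ,
      if_true, ← Finset.sum_div, ← Finset.mul_sum, hb, hcancel _ (ha0 u) (ham u)]
    ring
  · have hcompl : μ v - a v = ν v - b v := by by_cases hv : v ∈ e <;> simp [a, b, hv, hoff]
    simp only [Finset.sum_add_distrib, Finset.sum_ite_eq', Finset.mem_univ,
      if_true, ← Finset.sum_div, ← Finset.sum_mul, hm, mul_comm m, hcancel _ (hb0 v) (hbm v),
      hcompl]
    ring

theorem W1_le_one_of_eqOn_compl (he : e ∈ H.E) (hμ : IsProb μ) (hν : IsProb ν)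
    (hoff : ∀ v ∉ e, μ v = ν v) : W1 H μ ν ≤ 1 := by
  have hπ := isCoupling_localCoupling hμ hν hoff
  have hb := sum_indicator_eq_of_eqOn_compl hμ hν hoff
  rw [isProb_iff] at hμ hν
  refine (W1_le_sum hπ).trans ?_
  unfold localCoupling
  set a := e.indicator μ
  set b := e.indicator ν
  generalize hm : ∑ v, a v = m at hb ⊢
  have ha0 : ∀ v, 0 ≤ a v := Set.indicator_nonneg fun v _ => hμ.1 v
  have hb0 : ∀ v, 0 ≤ b v := Set.indicator_nonneg fun v _ => hν.1 v
  have hm0 : 0 ≤ m := hm ▸ Finset.sum_nonneg fun v _ => ha0 v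
  have hcost : ∀ u v : V, (H.dist u v : ℝ) *
      ((if u = v then μ u - a u else 0) + a u * b v / m) ≤ a u * b v / m := by
    intro u v
    have hab0 : 0 ≤ a u * b v / m := div_nonneg (mul_nonneg (ha0 u) (hb0 v)) hm0
    by_cases huv : u = v
    · simpa [huv, HGraph.dist_self] using hab0
    · simp only [huv, if_false, zero_add]
      by_cases huve : u ∈ e ∧ v ∈ e
      · have hd : (H.dist u v : ℝ) ≤ 1 := by
          exact_mod_cast HGraph.dist_le_one_of_mem he huve.1 huve.2
        exact mul_le_of_le_one_left hab0 hd
      · rcases not_and_or.1 huve with h | h <;> simp [a, b, h]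
  calc _ ≤ ∑ p : V × V, a p.1 * b p.2 / m := Finset.sum_le_sum fun p _ => hcost p.1 p.2
    _ = m * m / m := by
      rw [← Finset.sum_div, Fintype.sum_prod_type]
      simp only [← Finset.mul_sum, hb, ← Finset.sum_mul, hm]
    _ ≤ 1 := by
      rw [mul_self_div_self, ← hm, ← hμ.2]
      exact Finset.sum_le_sum fun v _ => Set.indicator_le_self' (fun v _ => hμ.1 v) v

end Transport

section Chains

variable {V : Type*} {H : HGraph V} {μ ν ρ : V → ℝ}

theorem isProb_dirac (x : V) : IsProb (dirac x) :=
  ⟨fun v => by unfold dirac; split_ifs <;> norm_num,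
    (Set.finite_singleton x).subset fun v hv => by by_contra h; simp_all [dirac],
    tsum_ite_eq x 1⟩

theorem WhAdmissible.single (hμ : IsProb μ) (hν : IsProb ν) {e : Set V} (he : e ∈ H.E)
    (hsupp : Function.support (fun v => ν v - μ v) ⊆ e) :
    WhAdmissible H μ ν 1 (fun i => if i = 0 then μ else ν) := by
  refine ⟨rfl, rfl, fun i _ => ?_, fun i hi => ⟨e, he, ?_⟩⟩
  · dsimp only
    split_ifs <;> assumption
  · simpa [show i = 0 by omega] using hsupp

theorem WhAdmissible.append {I J : ℕ} {ξ η : ℕ → V → ℝ} (hξ : WhAdmissible H μ ν I ξ)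
    (hη : WhAdmissible H ν ρ J η) :
    WhAdmissible H μ ρ (I + J) (fun i => if i ≤ I then ξ i else η (i - I)) := by
  obtain ⟨hξ0, hξI, hξp, hξs⟩ := hξ
  obtain ⟨hη0, hηJ, hηp, hηs⟩ := hη
  have h_of_le : ∀ i, I ≤ i → (if i ≤ I then ξ i else η (i - I)) = η (i - I) := by
    intro i hi
    rcases hi.eq_or_lt with rfl | hlt
    · simp [hξI, hη0]
    · simp [hlt.not_ge]
  refine ⟨by simp [hξ0], ?_, fun i hi => ?_, fun i hi => ?_⟩
  · dsimp only
    rw [h_of_le _ (by omega), Nat.add_sub_cancel_left, hηJ]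
  · rcases le_total i I with hiI | hIi
    · simpa [hiI] using hξp i hiI
    · dsimp only
      rw [h_of_le i hIi]
      exact hηp _ (by omega)
  · rcases lt_or_ge i I with hiI | hIi
    · simpa [hiI.le, Nat.succ_le_of_lt hiI] using hξs i hiI
    · dsimp only
      rw [h_of_le i hIi, h_of_le (i + 1) (by omega), Nat.sub_add_comm hIi]
      exact hηs _ (by omega)

theorem WhAdmissible.reverse {I : ℕ} {ξ : ℕ → V → ℝ} (hξ : WhAdmissible H μ ν I ξ) :
    WhAdmissible H ν μ I (fun i => ξ (I - i)) := by
  obtain ⟨hξ0, hξI, hξp, hξs⟩ := hξ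
  refine ⟨by simpa using hξI, by simpa using hξ0, fun i _ => hξp _ (by omega), fun i hi => ?_⟩
  obtain ⟨e, he, hsupp⟩ := hξs (I - (i + 1)) (by omega)
  refine ⟨e, he, fun v hv => hsupp ?_⟩
  rw [show I - (i + 1) + 1 = I - i by omega]
  simp only [Function.mem_support, ne_eq] at hv ⊢
  contrapose! hv
  linarith

theorem whAdmissible_dirac_of_isPath {x y : V} {n : ℕ} {f : ℕ → V} (hf0 : f 0 = x)
    (hfn : f n = y) (hstep : ∀ i < n, ∃ e ∈ H.E, f i ∈ e ∧ f (i + 1) ∈ e) :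
    WhAdmissible H (dirac x) (dirac y) n (fun i => dirac (f i)) := by
  refine ⟨congrArg dirac hf0, congrArg dirac hfn, fun i _ => isProb_dirac _, fun i hi => ?_⟩
  obtain ⟨e, he, h1, h2⟩ := hstep i hi
  refine ⟨e, he, fun v hv => ?_⟩
  by_cases hv1 : v = f (i + 1)
  · exact hv1 ▸ h2
  · by_cases hv2 : v = f i
    · exact hv2 ▸ h1
    · simp [dirac, hv1, hv2] at hv

theorem exists_whAdmissible_dirac_of_isPath (hconn : H.Connected) (x y : V) :
    ∃ ξ, WhAdmissible H (dirac x) (dirac y) (H.dist x y) ξ := by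
  obtain ⟨f, hf0, hfn, hstep⟩ := HGraph.isPath_dist hconn x y
  exact ⟨_, whAdmissible_dirac_of_isPath hf0 hfn hstep⟩

variable [Fintype V]

theorem eq_dirac_of_support_subset (hμ : IsProb μ) {x : V}
    (hsupp : Function.support μ ⊆ {x}) : μ = dirac x := by
  have hoff : ∀ v, v ≠ x → μ v = 0 := fun v hv =>
    Function.notMem_support.1 fun h => hv (hsupp h)
  have hμ1 := (isProb_iff.1 hμ).2
  rw [Finset.sum_eq_single x (fun v _ => hoff v) (by simp)] at hμ1
  funext v
  by_cases hv : v = x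
  · simp [dirac, hv, hμ1]
  · simp [dirac, hv, hoff v hv]

theorem isProb_add_mul_dirac_sub_dirac (hμ : IsProb μ) {x z : V} (hxz : x ≠ z) :
    IsProb fun v => μ v + μ z * (dirac x v - dirac z v) := by
  obtain ⟨hμ0, hμ1⟩ := isProb_iff.1 hμ
  refine isProb_iff.2 ⟨fun v => ?_, ?_⟩
  · by_cases hvz : v = z
    · simp [dirac, hvz, hxz.symm]
    · by_cases hvx : v = x <;> simp [dirac, hvz, hvx, hxz] <;> linarith [hμ0 v, hμ0 x, hμ0 z]
  · simp [Finset.sum_add_distrib, ← Finset.mul_sum, Finset.sum_sub_distrib, dirac, hμ1]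

theorem exists_whAdmissible_dirac (x : V) (s : Finset V) (hs : ∀ v ∈ s, H.Adj x v)
    (hμ : IsProb μ) (hsupp : Function.support μ ⊆ insert x ↑s) :
    ∃ I ξ, WhAdmissible H μ (dirac x) I ξ := by
  induction s using Finset.induction_on generalizing μ with
  | empty =>
    exact ⟨0, fun _ => μ, rfl, eq_dirac_of_support_subset hμ (by simpa using hsupp),
      fun _ _ => hμ, fun i hi => absurd hi (by omega)⟩
  | @insert z s hz ih =>
    obtain ⟨hxz, e, he, hxe, hze⟩ := hs z (Finset.mem_insert_self z s)
    set μ' : V → ℝ := fun v => μ v + μ z * (dirac x v - dirac z v)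
    have hμ' : IsProb μ' := isProb_add_mul_dirac_sub_dirac hμ hxz
    have hstep := WhAdmissible.single (H := H) hμ hμ' he fun v hv => by
      by_cases hvx : v = x
      · exact hvx ▸ hxe
      · by_cases hvz : v = z
        · exact hvz ▸ hze
        · simp [μ', dirac, hvx, hvz] at hv
    have hsupp' : Function.support μ' ⊆ insert x ↑s := by
      intro v hv
      by_cases hvx : v = x
      · simp [hvx]
      · by_cases hvz : v = z
        · simp [μ', dirac, hvz, hxz.symm] at hv
        · have : v ∈ Function.support μ := by simpa [μ', dirac, hvx, hvz] using hv
          simpa [hvx, hvz] using hsupp this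
    obtain ⟨I, ξ, hξ⟩ := ih (fun v hv => hs v (Finset.mem_insert_of_mem hv)) hμ' hsupp'
    exact ⟨_, _, hstep.append hξ⟩

end Chains

namespace HGraph

variable {V : Type*} [Fintype V] (H : HGraph V)

noncomputable def neighborFinset (x : V) : Finset V := Finset.univ.filter (H.Adj x)

theorem mem_neighborFinset {x v : V} : v ∈ H.neighborFinset x ↔ H.Adj x v := by
  simp [neighborFinset]

theorem degree_eq_card_neighborFinset (x : V) : H.degree x = (H.neighborFinset x).card := by
  rw [degree, neighborFinset, ← Set.ncard_coe_finset]
  congr 1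
  ext v
  simp

end HGraph

section RandomWalk

open HGraph

variable {V : Type*} [Fintype V] {H : HGraph V} {α : ℝ} {x : V}

theorem sum_mul_rw (g : V → ℝ) :
    ∑ v, g v * rw H α x v = α * g x + (1 - α) / H.degree x * ∑ v ∈ H.neighborFinset x, g v := by
  have hrw : ∀ v, rw H α x v =
      (if v = x then α else 0) + if H.Adj x v then (1 - α) / H.degree x else 0 := by
    intro v
    by_cases hv : v = x
    · simp [rw, hv, HGraph.Adj]
    · simp [rw, hv]
  simp only [hrw, mul_add, Finset.sum_add_distrib, mul_ite, mul_zero, Finset.sum_ite_eq',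
    Finset.mem_univ, if_true, ← Finset.sum_filter, ← Finset.sum_mul]
  rw [neighborFinset]
  ring

theorem isProb_rw (hα : α ∈ Icc (0 : ℝ) 1) (hdeg : 0 < H.degree x) : IsProb (rw H α x) := by
  refine isProb_iff.2 ⟨fun v => ?_, ?_⟩
  · have : 0 ≤ (1 - α) / H.degree x := div_nonneg (by linarith [hα.2]) (Nat.cast_nonneg _)
    unfold rw
    split_ifs <;> first | exact hα.1 | exact this | exact le_rfl
  · have := sum_mul_rw (H := H) (α := α) (x := x) (fun _ => 1)
    rw [Finset.sum_const, ← degree_eq_card_neighborFinset, nsmul_one,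
      div_mul_cancel₀ _ (by exact_mod_cast hdeg.ne')] at this
    simpa using this

theorem support_rw_subset : Function.support (rw H α x) ⊆ insert x ↑(H.neighborFinset x) := by
  intro v hv
  by_cases hvx : v = x
  · simp [hvx]
  · by_cases hadj : H.Adj x v
    · simp [mem_neighborFinset, hadj]
    · simp [rw, hvx, hadj] at hv

theorem add_mul_le_sum_mul_rw (hα : α ≤ 1) (hdeg : 0 < H.degree x) {g : V → ℝ} {c : ℝ}
    (hg : ∀ v, H.Adj x v → c ≤ g v) :
    α * g x + (1 - α) * c ≤ ∑ v, g v * rw H α x v := by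
  have hsum : (H.degree x : ℝ) * c ≤ ∑ v ∈ H.neighborFinset x, g v := by
    simpa [degree_eq_card_neighborFinset] using
      Finset.card_nsmul_le_sum _ _ c fun v hv => hg v ((mem_neighborFinset H).1 hv)
  have hdeg' : (H.degree x : ℝ) ≠ 0 := by exact_mod_cast hdeg.ne'
  rw [sum_mul_rw]
  calc α * g x + (1 - α) * c = α * g x + (1 - α) / H.degree x * (H.degree x * c) := by
        field_simp
    _ ≤ _ := by gcongr

theorem sum_mul_rw_le_add_mul (hα : α ≤ 1) (hdeg : 0 < H.degree x) {g : V → ℝ} {c : ℝ}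
    (hg : ∀ v, H.Adj x v → g v ≤ c) :
    ∑ v, g v * rw H α x v ≤ α * g x + (1 - α) * c := by
  have hsum : ∑ v ∈ H.neighborFinset x, g v ≤ H.degree x * c := by
    simpa [degree_eq_card_neighborFinset] using
      Finset.sum_le_card_nsmul _ _ c fun v hv => hg v ((mem_neighborFinset H).1 hv)
  have hdeg' : (H.degree x : ℝ) ≠ 0 := by exact_mod_cast hdeg.ne'
  rw [sum_mul_rw]
  calc _ ≤ α * g x + (1 - α) / H.degree x * (H.degree x * c) := by gcongr
    _ = α * g x + (1 - α) * c := by field_simp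

theorem exists_whAdmissible_rw_rw (hconn : H.Connected) {y : V} (hxy : x ≠ y)
    (hα : α ∈ Icc (0 : ℝ) 1) : ∃ I ξ, WhAdmissible H (rw H α x) (rw H α y) I ξ := by
  have hrw_dirac : ∀ {u w : V}, u ≠ w → ∃ I ξ, WhAdmissible H (rw H α u) (dirac u) I ξ :=
    fun huw => exists_whAdmissible_dirac _ _ (fun v hv => (mem_neighborFinset H).1 hv)
      (isProb_rw hα (degree_pos hconn huw)) support_rw_subset
  obtain ⟨I, ξ, hξ⟩ := hrw_dirac hxy
  obtain ⟨ζ, hζ⟩ := exists_whAdmissible_dirac_of_isPath hconn x y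
  obtain ⟨J, η, hη⟩ := hrw_dirac hxy.symm
  exact ⟨_, _, (hξ.append hζ).append hη.reverse⟩

end RandomWalk

section TransportCost

open HGraph

variable {V : Type*} [Fintype V] {H : HGraph V} {h : ℝ → ℝ} {D0 D1 : ℝ} {μ ν : V → ℝ}

theorem WhAdmissible.W1_mem_Icc {I : ℕ} {ξ : ℕ → V → ℝ} (hadm : WhAdmissible H μ ν I ξ)
    {i : ℕ} (hi : i < I) : W1 H (ξ i) (ξ (i + 1)) ∈ Icc (0 : ℝ) 1 := by
  obtain ⟨e, he, hsupp⟩ := hadm.2.2.2 i hi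
  refine ⟨W1_nonneg _ _, W1_le_one_of_eqOn_compl he (hadm.2.2.1 i hi.le) (hadm.2.2.1 (i + 1) hi)
    fun v hv => ?_⟩
  have := Function.notMem_support.1 fun h => hv (hsupp h)
  linarith

theorem Wh_le_sum (hc : CostFn h D0 D1) {I : ℕ} {ξ : ℕ → V → ℝ}
    (hadm : WhAdmissible H μ ν I ξ) :
    Wh H h μ ν ≤ ∑ i ∈ Finset.range I, h (W1 H (ξ i) (ξ (i + 1))) := by
  refine csInf_le ⟨0, ?_⟩ ⟨I, ξ, hadm, rfl⟩
  rintro _ ⟨J, η, hη, rfl⟩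
  exact Finset.sum_nonneg fun i hi => hc.nonneg _ (hη.W1_mem_Icc (Finset.mem_range.1 hi))

theorem nat_mul_add_le_Wh (hc : CostFn h D0 D1) (hne : ∃ I ξ, WhAdmissible H μ ν I ξ)
    {φ : V → ℝ} (hφ : ∀ u v, φ u - φ v ≤ H.dist u v) {k : ℕ} {s : ℝ}
    (hs : s ∈ Icc (0 : ℝ) 1) (hks : k + s ≤ ∑ v, φ v * μ v - ∑ v, φ v * ν v) :
    k * h 1 + h s ≤ Wh H h μ ν := by
  obtain ⟨I₀, ξ₀, hadm₀⟩ := hne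
  refine le_csInf ⟨_, I₀, ξ₀, hadm₀, rfl⟩ ?_
  rintro _ ⟨I, ξ, hadm, rfl⟩
  have hsteps : ∑ v, φ v * μ v - ∑ v, φ v * ν v ≤
      ∑ i ∈ Finset.range I, W1 H (ξ i) (ξ (i + 1)) := by
    rw [← hadm.1, ← hadm.2.1, ← Finset.sum_range_sub' (f := fun i => ∑ v, φ v * ξ i v)]
    refine Finset.sum_le_sum fun i hi => ?_
    have hi := Finset.mem_range.1 hi
    exact sum_mul_sub_sum_mul_le_W1 (hadm.2.2.1 i hi.le) (hadm.2.2.1 (i + 1) hi) hφ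
  exact hc.nat_mul_add_le_sum (fun i hi => hadm.W1_mem_Icc hi) hs (hks.trans hsteps)

theorem Wh_dirac_dirac (hconn : H.Connected) (hc : CostFn h D0 D1) (x y : V) :
    Wh H h (dirac x) (dirac y) = H.dist x y * h 1 := by
  obtain ⟨ξ, hξ⟩ := exists_whAdmissible_dirac_of_isPath hconn x y
  refine le_antisymm ?_ ?_
  · calc Wh H h (dirac x) (dirac y) ≤ _ := Wh_le_sum hc hξ
      _ ≤ ∑ _i ∈ Finset.range (H.dist x y), h 1 := Finset.sum_le_sum fun i hi => by
          have hmem := hξ.W1_mem_Icc (Finset.mem_range.1 hi)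
          exact hc.mono hmem ⟨zero_le_one, le_rfl⟩ hmem.2
      _ = H.dist x y * h 1 := by simp
  · simpa [hc.zero] using nat_mul_add_le_Wh hc ⟨_, _, hξ⟩ (dist_sub_dist_le hconn · · y)
      (k := H.dist x y) (s := 0) ⟨le_rfl, zero_le_one⟩
      (by simp [dirac, HGraph.dist_self])

theorem le_Wh_rw_rw (hconn : H.Connected) (hc : CostFn h D0 D1) {x y : V}
    (hd : 2 ≤ H.dist x y) {α : ℝ} (hα : 1 / 2 ≤ α) (hα1 : α ≤ 1) :
    (H.dist x y - 1 : ℝ) * h 1 + h (2 * α - 1) ≤ Wh H h (rw H α x) (rw H α y) := by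
  have hxy := ne_of_two_le_dist hd
  have hx := add_mul_le_sum_mul_rw hα1 (degree_pos hconn hxy) (g := fun v => H.dist v y)
    (c := H.dist x y - 1) fun v hv => by
      have := dist_sub_dist_le hconn x v y
      have : (H.dist x v : ℝ) ≤ 1 := by exact_mod_cast hv.dist_le_one
      linarith
  have hy := sum_mul_rw_le_add_mul hα1 (degree_pos hconn hxy.symm) (g := fun v => H.dist v y)
    (c := 1) fun v hv => by exact_mod_cast hv.symm.dist_le_one
  have hk : ((H.dist x y - 1 : ℕ) : ℝ) = H.dist x y - 1 := Nat.cast_pred (by omega)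
  rw [← hk]
  refine nat_mul_add_le_Wh hc (exists_whAdmissible_rw_rw hconn hxy ⟨by linarith, hα1⟩)
    (dist_sub_dist_le hconn · · y) ⟨by linarith, by linarith⟩ ?_
  simp only [HGraph.dist_self, Nat.cast_zero, mul_zero, zero_add] at hy
  linarith

end TransportCost

section Curvature

open HGraph

variable {V : Type*} {H : HGraph V} {h : ℝ → ℝ} {D0 D1 : ℝ} {x y : V}

theorem ORic_le [Fintype V] (hconn : H.Connected) (hc : CostFn h D0 D1)
    (hd : 2 ≤ H.dist x y) {α : ℝ} (hα : 1 / 2 ≤ α) (hα1 : α ≤ 1) :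
    ORic H h α x y ≤ (h 1 - h (2 * α - 1)) / (H.dist x y * h 1) := by
  have hpos : 0 < (H.dist x y : ℝ) * h 1 :=
    mul_pos (by exact_mod_cast (by omega : 0 < H.dist x y)) hc.one_pos
  have := le_Wh_rw_rw hconn hc hd hα hα1
  rw [ORic, Wh_dirac_dirac hconn hc, one_sub_div hpos.ne']
  exact div_le_div_of_nonneg_right (by linarith) hpos.le

theorem hLLY_nonpos_of_two_le_dist [Fintype V] (hconn : H.Connected) (hc : CostFn h D0 0)
    (hd : 2 ≤ H.dist x y) : hLLY H h x y ≤ 0 := by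
  set C := 2 / (H.dist x y * h 1) with hC
  have hslope : Tendsto (fun α : ℝ => C * ((h 1 - h (2 * α - 1)) / (1 - (2 * α - 1))))
      (𝓝[<] 1) (𝓝 0) := by
    simpa using (hc.d1.comp tendsto_two_mul_sub_one_nhdsLT).const_mul C
  refine liminf_nonpos_of_eventually_le_of_tendsto ?_ hslope
  filter_upwards [Ioo_mem_nhdsLT (show (1 / 2 : ℝ) < 1 by norm_num)] with α ⟨hα, hα1⟩
  have h1α : 0 < 1 - α := by linarith
  have hd0 : (H.dist x y : ℝ) ≠ 0 := by exact_mod_cast (by omega : H.dist x y ≠ 0)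
  have hh1 := hc.one_pos.ne'
  calc ORic H h α x y / (1 - α)
      ≤ (h 1 - h (2 * α - 1)) / (H.dist x y * h 1) / (1 - α) :=
        div_le_div_of_nonneg_right (ORic_le hconn hc hd hα.le hα1.le) h1α.le
    _ = C * ((h 1 - h (2 * α - 1)) / (1 - (2 * α - 1))) := by
        rw [show 1 - (2 * α - 1) = 2 * (1 - α) by ring, hC]
        field_simp

end Curvature

section InfiniteVertexSet

open HGraph

variable {V : Type*} [Infinite V] {H : HGraph V}

/-- On an infinite vertex set `∑'` of a non-summable family is the junk value `0`: unit mass on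
every pair of vertices outside both supports makes the row, column and cost sums of that part
non-summable, so it is a "coupling" of reported cost `0`. -/
theorem W1_eq_zero_of_infinite (hconn : H.Connected) {μ ν : V → ℝ} (hμ : IsProb μ)
    (hν : IsProb ν) : W1 H μ ν = 0 := by
  set T := (Function.support μ ∪ Function.support ν)ᶜ
  have hT : T.Infinite := (hμ.2.1.union hν.2.1).infinite_compl
  have hμT : ∀ u ∈ T, μ u = 0 := fun u hu => Function.notMem_support.1 fun h => hu (.inl h)
  have hνT : ∀ u ∈ T, ν u = 0 := fun u hu => Function.notMem_support.1 fun h => hu (.inr h)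
  have htsumT : ∑' v, (if v ∈ T then (1 : ℝ) else 0) = 0 :=
    tsum_eq_zero_of_not_summable <| not_summable_of_one_le_on_infinite hT fun v hv => by simp [hv]
  set π : V → V → ℝ := fun u v => μ u * ν v + if u ∈ T ∧ v ∈ T then 1 else 0
  have hπ : IsCoupling π μ ν := by
    refine ⟨fun u v => add_nonneg (mul_nonneg (hμ.1 u) (hν.1 v)) (by positivity), fun u => ?_,
      fun v => ?_⟩
    · by_cases hu : u ∈ T
      · simpa [π, hμT u hu, hu] using htsumT
      · simp [π, hu, tsum_mul_left, hν.2.2]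
    · by_cases hv : v ∈ T
      · simpa [π, hνT v hv, hv] using htsumT
      · simp [π, hv, tsum_mul_right, hμ.2.2]
  have hcost : ∑' p : V × V, (H.dist p.1 p.2 : ℝ) * π p.1 p.2 = 0 := by
    refine tsum_eq_zero_of_not_summable ?_
    obtain ⟨t, ht⟩ := hT.nonempty
    refine not_summable_of_one_le_on_infinite
      (((hT.sdiff (Set.finite_singleton t)).image fun _ _ _ _ h => congrArg Prod.fst h :
        ((fun v => (v, t)) '' (T \ {t})).Infinite)) ?_
    rintro _ ⟨v, ⟨hv, hvt⟩, rfl⟩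
    have hd : (1 : ℝ) ≤ H.dist v t := by exact_mod_cast one_le_dist hconn hvt
    have hπ1 : 1 ≤ π v t := by
      simp only [π, hv, ht, and_self, if_true]
      linarith [mul_nonneg (hμ.1 v) (hν.1 t)]
    nlinarith
  exact le_antisymm (Real.sInf_nonpos' ⟨0, ⟨π, hπ, hcost.symm⟩, le_rfl⟩) (W1_nonneg μ ν)

theorem Wh_eq_zero_of_infinite (hconn : H.Connected) {h : ℝ → ℝ} (h0 : h 0 = 0)
    (μ ν : V → ℝ) : Wh H h μ ν = 0 := by
  have hzero : ∀ c ∈ {c | ∃ I ξ, WhAdmissible H μ ν I ξ ∧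
      c = ∑ i ∈ Finset.range I, h (W1 H (ξ i) (ξ (i + 1)))}, c = 0 := by
    rintro _ ⟨I, ξ, hadm, rfl⟩
    refine Finset.sum_eq_zero fun i hi => ?_
    have hi := Finset.mem_range.1 hi
    rw [W1_eq_zero_of_infinite hconn (hadm.2.2.1 i hi.le) (hadm.2.2.1 (i + 1) hi), h0]
  exact le_antisymm (Real.sInf_nonpos fun c hc => (hzero c hc).le)
    (Real.sInf_nonneg fun c hc => (hzero c hc).ge)

theorem hLLY_eq_zero_of_infinite (hconn : H.Connected) {h : ℝ → ℝ} (h0 : h 0 = 0) (x y : V) :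
    hLLY H h x y = 0 := by
  refine liminf_eq_zero_of_tendsto_atTop ?_
  simpa [ORic, Wh_eq_zero_of_infinite hconn h0, Function.comp_def] using
    tendsto_inv_nhdsGT_zero.comp tendsto_one_sub_nhdsLT

end InfiniteVertexSet

theorem hLLY_nonpos_of_d1_zero_general {V : Type*} (H : HGraph V)
    (hconn : H.Connected)
    (h : ℝ → ℝ) (D0 : ℝ) (hc : CostFn h D0 0)
    (hdiam : ∃ x y : V, 2 ≤ H.dist x y) :
    ∃ x y : V, x ≠ y ∧ hLLY H h x y ≤ 0 := by
  obtain ⟨x, y, hd⟩ := hdiam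
  refine ⟨x, y, HGraph.ne_of_two_le_dist hd, ?_⟩
  cases finite_or_infinite V
  · have := Fintype.ofFinite V
    exact hLLY_nonpos_of_two_le_dist hconn hc hd
  · exact (hLLY_eq_zero_of_infinite hconn hc.zero x y).le

/-- If `h'(1) = 0` and the diameter is at least 2, then the infimum of the
`h`-LLY–Ricci curvature is nonpositive: a positive uniform lower curvature
bound is impossible. -/
theorem hLLY_nonpos_of_d1_zero {V : Type*} (H : HGraph V)
    (hconn : H.Connected) (hlf : H.LocallyFinite) (hsimp : H.Simple)
    (h : ℝ → ℝ) (D0 : ℝ) (hc : CostFn h D0 0)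
    (hdiam : ∃ x y : V, 2 ≤ H.dist x y) :
    ∃ x y : V, x ≠ y ∧ hLLY H h x y ≤ 0 :=
  hLLY_nonpos_of_d1_zero_general H hconn h D0 hc hdiam
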